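/- arXiv:1012.5265 — 2 statements merged into one kernel-verified Lean document; each statement's English description precedes it below -/
import Mathlib

section
/- Let λ be a Young diagram with ℓ rows total, having k distinct row lengths occurring with multiplicities d₁, ..., d_k, and let N be the corresponding nilpotent Jordan matrix. Then the number of distinct matrices of the form σ N σ^{-1} with σ ∈ S_n (acting as a permutation matrix) that are in highest form equals ℓ! / (d₁! d₂! ⋯ d_k!). -/
/-- `ord` enumerates the cells of `μ` in English reading order. -/
def EnglishOrd (μ : YoungDiagram) (ord : Fin μ.card ≃ μ.cells) : Prop :=
  ∀ i j : Fin μ.card, i < j →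
    ((ord i : ℕ × ℕ).1 < (ord j : ℕ × ℕ).1 ∨
      ((ord i : ℕ × ℕ).1 = (ord j : ℕ × ℕ).1 ∧ (ord i : ℕ × ℕ).2 < (ord j : ℕ × ℕ).2))

/-- The adjacent-pair matrix of a filling `T : μ.cells ≃ Fin μ.card`. -/
def adjPairMatrix (μ : YoungDiagram) (T : μ.cells ≃ Fin μ.card) :
    Matrix (Fin μ.card) (Fin μ.card) ℂ :=
  Matrix.of fun i j =>
    if (T.symm j : ℕ × ℕ).1 = (T.symm i : ℕ × ℕ).1 ∧
        (T.symm j : ℕ × ℕ).2 = (T.symm i : ℕ × ℕ).2 + 1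
    then 1 else 0

/-- The permutation matrix of `σ`, whose `i`-th column is `e_{σ(i)}`. -/
def permMatrix {n : ℕ} (σ : Equiv.Perm (Fin n)) : Matrix (Fin n) (Fin n) ℂ :=
  Matrix.of fun i j => if σ j = i then 1 else 0

/-- `X i k` is a pivot of `X`. -/
def IsPivot {n : ℕ} (X : Matrix (Fin n) (Fin n) ℂ) (i k : Fin n) : Prop :=
  X i k ≠ 0 ∧ (∀ j, j < k → X i j = 0) ∧ (∀ j, i < j → X j k = 0)

open Classical in
/-- `r_j`: the (one-indexed) row of the pivot in column `j` if it exists, `0` otherwise. -/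
noncomputable def pivotRow {n : ℕ} (X : Matrix (Fin n) (Fin n) ℂ) (j : Fin n) : ℕ :=
  if h : ∃ i, IsPivot X i j then (h.choose : ℕ) + 1 else 0

/-- Highest form: strictly upper triangular with nondecreasing pivot rows. -/
def IsHighestForm {n : ℕ} (X : Matrix (Fin n) (Fin n) ℂ) : Prop :=
  (∀ i j : Fin n, j ≤ i → X i j = 0) ∧ Monotone (pivotRow X)

/-!
Conjugating `N` by a permutation matrix only relabels the cells of `μ`, so the matrices counted
are the `adjPairMatrix μ T` for labellings `T` of the cells. Such a matrix is in highest form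
exactly when `T` reads the diagram column by column, every column in one common order `π` of the
rows: the pivot-free columns are those of the first-column cells, so these come first, and
monotonicity of the pivot rows carries the order of the labels of each column over to the next.
Two such readings give the same matrix if and only if they list the row lengths in the same order,
since the length of the `t`-th row in the order `π` is the number of indices reachable from the
label `t`. Hence the matrices correspond to the rearrangements of the row lengths, and there are
`ℓ! / (d₁! ⋯ d_k!)` of those by the orbit-stabilizer theorem.
-/

open Equiv Finset Function

section OrderedLabellings

variable {α : Type*} [Fintype α] {m : ℕ}

theorem Equiv.val_eq_card_lt (e : α ≃ Fin m) (u : α) :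
    (e u : ℕ) = Fintype.card {v // e v < e u} := by
  rw [Fintype.card_congr (e.subtypeEquiv (q := (· < e u)) fun _ => Iff.rfl),
    Fintype.card_subtype, filter_gt_eq_Iio, Fin.card_Iio]

theorem Equiv.ext_of_lt_iff {e e' : α ≃ Fin m} (h : ∀ u v, e u < e v ↔ e' u < e' v) :
    e = e' :=
  Equiv.ext fun u => Fin.ext <| by
    rw [e.val_eq_card_lt, e'.val_eq_card_lt]
    exact Fintype.card_congr (subtypeEquivRight fun v => h v u)

theorem exists_equiv_fin_lt_iff {β : Type*} [LinearOrder β] {key : α → β}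
    (hkey : Injective key) (h : Fintype.card α = m) :
    ∃ e : α ≃ Fin m, ∀ u v, e u < e v ↔ key u < key v := by
  let _ := LinearOrder.lift' key hkey
  exact ⟨(Fintype.orderIsoFinOfCardEq α h).symm.toEquiv,
    fun _ _ => (Fintype.orderIsoFinOfCardEq α h).symm.lt_iff_lt⟩

end OrderedLabellings

theorem Fin.lt_card_iff_mem_of_isLowerSet {n : ℕ} {s : Finset (Fin n)}
    (hs : IsLowerSet (s : Set (Fin n))) (j : Fin n) : (j : ℕ) < #s ↔ j ∈ s := by
  constructor
  · intro hj
    by_contra hjs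
    have hsub : s ⊆ Iio j := fun i hi => mem_Iio.2 <| lt_of_not_ge fun hji => hjs (hs hji hi)
    have := card_le_card hsub
    rw [Fin.card_Iio] at this
    omega
  · intro hj
    have := card_le_card (show Iic j ⊆ s from fun i hi => hs (mem_Iic.1 hi) hj)
    rw [Fin.card_Iic] at this
    omega

theorem Nat.card_range_eq_of_forall_eq_iff {X A B : Type*} {F : X → A} {G : X → B}
    (h : ∀ x y, F x = F y ↔ G x = G y) : Nat.card (Set.range F) = Nat.card (Set.range G) := by
  rw [← Nat.card_congr (Setoid.quotientKerEquivRange F),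
    ← Nat.card_congr (Setoid.quotientKerEquivRange G),
    (Setoid.ext h : Setoid.ker F = Setoid.ker G)]

theorem Nat.card_range_comp_perm {α ι : Type*} [Fintype α] [DecidableEq α] [DecidableEq ι]
    (f : α → ι) :
    Nat.card (Set.range fun σ : Perm α => f ∘ σ) =
      (Fintype.card α).factorial /
        ∏ i ∈ univ.image f, (Fintype.card {a // f a = i}).factorial := by
  have horbit : Set.range (fun σ : Perm α => f ∘ σ) = MulAction.orbit (Perm α)ᵈᵐᵃ f :=
    (DomMulAct.mk.symm.surjective.range_comp _).symm
  have hstab : Nat.card (MulAction.stabilizer (Perm α)ᵈᵐᵃ f) =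
      ∏ i ∈ univ.image f, (Fintype.card {a // f a = i}).factorial := by
    rw [← DomMulAct.stabilizer_card', ← Nat.card_eq_fintype_card]
    exact Nat.card_congr (subtypeEquiv DomMulAct.mk.symm fun _ => DomMulAct.mem_stabilizer_iff)
  have hgroup : Nat.card (Perm α)ᵈᵐᵃ = (Fintype.card α).factorial := by
    rw [Nat.card_congr DomMulAct.mk.symm, Nat.card_eq_fintype_card, Fintype.card_perm]
  rw [horbit, ← hgroup,
    ← Nat.card_congr (MulAction.orbitProdStabilizerEquivGroup (Perm α)ᵈᵐᵃ f), Nat.card_prod,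
    hstab, Nat.mul_div_cancel _ (prod_pos fun _ _ => Nat.factorial_pos _)]

noncomputable def numReachable {n : ℕ} (M : Matrix (Fin n) (Fin n) ℂ) (i : Fin n) : ℕ :=
  Nat.card {j // Relation.ReflTransGen (fun i j => M i j ≠ 0) i j}

section Pivots

variable {n : ℕ} {X : Matrix (Fin n) (Fin n) ℂ} {i i' k : Fin n}

theorem IsPivot.unique (h : IsPivot X i k) (h' : IsPivot X i' k) : i = i' :=
  le_antisymm (not_lt.1 fun hlt => h.1 (h'.2.2 i hlt)) (not_lt.1 fun hlt => h'.1 (h.2.2 i' hlt))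

theorem pivotRow_eq_of_isPivot (h : IsPivot X i k) : pivotRow X k = i + 1 := by
  have hex : ∃ i, IsPivot X i k := ⟨i, h⟩
  rw [pivotRow, dif_pos hex, hex.choose_spec.unique h]

theorem pivotRow_eq_zero_of_forall (h : ∀ i, X i k = 0) : pivotRow X k = 0 := by
  rw [pivotRow, dif_neg]
  rintro ⟨i, hi, -⟩
  exact hi (h i)

end Pivots

theorem permMatrix_mul_mul_permMatrix_inv {n : ℕ} (σ : Perm (Fin n))
    (A : Matrix (Fin n) (Fin n) ℂ) :
    permMatrix σ * A * permMatrix σ⁻¹ = A.submatrix σ.symm σ.symm := by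
  ext i j
  simp only [permMatrix, Perm.inv_def, Matrix.mul_apply, Matrix.of_apply, ite_mul, one_mul,
    zero_mul, mul_ite, mul_one, mul_zero, sum_ite_eq, mem_univ, ↓reduceIte,
    Matrix.submatrix_apply]
  simp [← eq_symm_apply]

namespace YoungDiagram

variable {μ : YoungDiagram}

theorem fst_lt_colLen_zero {c : ℕ × ℕ} (hc : c ∈ μ.cells) : c.1 < μ.colLen 0 :=
  mem_iff_lt_colLen.1 (μ.up_left_mem le_rfl (Nat.zero_le _) hc)

theorem cell_ext {u v : μ.cells} (h₁ : u.1.1 = v.1.1) (h₂ : u.1.2 = v.1.2) : u = v :=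
  Subtype.ext (Prod.ext h₁ h₂)

def cellRow (u : μ.cells) : Fin (μ.colLen 0) := ⟨u.1.1, fst_lt_colLen_zero u.2⟩

def firstCell (r : Fin (μ.colLen 0)) : μ.cells := ⟨(r, 0), mem_iff_lt_colLen.2 r.2⟩

/-- By truncated subtraction, a first-column cell is its own left neighbour. -/
def leftCell (u : μ.cells) : μ.cells :=
  ⟨(u.1.1, u.1.2 - 1), μ.up_left_mem le_rfl (Nat.sub_le _ _) u.2⟩

@[simp]
theorem cellRow_firstCell (r : Fin (μ.colLen 0)) : cellRow (firstCell r) = r :=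
  rfl

theorem firstCell_cellRow {u : μ.cells} (hu : u.1.2 = 0) : firstCell (cellRow u) = u :=
  cell_ext rfl hu.symm

theorem eq_of_leftCell_eq {u v : μ.cells} (hu : u.1.2 ≠ 0) (hv : v.1.2 ≠ 0)
    (h : leftCell u = leftCell v) : u = v := by
  have h' := congrArg Subtype.val h
  simp only [leftCell, Prod.mk.injEq] at h'
  exact cell_ext h'.1 (by omega)

theorem card_cells_fst_eq (r : ℕ) : Fintype.card {u : μ.cells // u.1.1 = r} = μ.rowLen r := by
  rw [μ.rowLen_eq_card, ← Fintype.card_coe]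
  exact Fintype.card_congr ((subtypeSubtypeEquivSubtypeInter (· ∈ μ.cells) (·.1 = r)).trans
    (subtypeEquivRight fun _ => by simp [row]))

theorem card_cells_snd_eq (c : ℕ) : Fintype.card {u : μ.cells // u.1.2 = c} = μ.colLen c := by
  rw [μ.colLen_eq_card, ← Fintype.card_coe]
  exact Fintype.card_congr ((subtypeSubtypeEquivSubtypeInter (· ∈ μ.cells) (·.2 = c)).trans
    (subtypeEquivRight fun _ => by simp [col]))

theorem rowLens_eq_ofFn : μ.rowLens = List.ofFn fun r : Fin (μ.colLen 0) => μ.rowLen r := by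
  apply List.ext_getElem <;> simp [rowLens]

theorem image_rowLen :
    univ.image (fun r : Fin (μ.colLen 0) => μ.rowLen r) = μ.rowLens.toFinset := by
  ext
  simp [rowLens_eq_ofFn]

theorem count_rowLens (v : ℕ) :
    μ.rowLens.count v = Fintype.card {r : Fin (μ.colLen 0) // μ.rowLen r = v} := by
  rw [← Multiset.coe_count, rowLens_eq_ofFn, ← Fin.univ_val_map, Multiset.count_map,
    Fintype.card_subtype]
  simp only [eq_comm]
  rfl

section AdjPairMatrix

variable (T : μ.cells ≃ Fin μ.card)

theorem adjPairMatrix_apply_apply (u v : μ.cells) :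
    adjPairMatrix μ T (T u) (T v) = if v.1.1 = u.1.1 ∧ v.1.2 = u.1.2 + 1 then 1 else 0 := by
  simp [adjPairMatrix]

theorem adjPairMatrix_apply_ne_zero_iff (u v : μ.cells) :
    adjPairMatrix μ T (T u) (T v) ≠ 0 ↔ v.1.2 ≠ 0 ∧ u = leftCell v := by
  rw [adjPairMatrix_apply_apply]
  simp only [ne_eq, ite_eq_right_iff, one_ne_zero, imp_false, not_not]
  constructor
  · rintro ⟨h₁, h₂⟩
    exact ⟨by omega, cell_ext h₁.symm (by simp [leftCell, h₂])⟩
  · rintro ⟨hv, rfl⟩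
    exact ⟨rfl, show v.1.2 = v.1.2 - 1 + 1 by omega⟩

theorem adjPairMatrix_trans (σ : Perm (Fin μ.card)) :
    adjPairMatrix μ (T.trans σ) = permMatrix σ * adjPairMatrix μ T * permMatrix σ⁻¹ := by
  rw [permMatrix_mul_mul_permMatrix_inv]
  rfl

theorem isPivot_adjPairMatrix {v : μ.cells} (hv : v.1.2 ≠ 0) :
    IsPivot (adjPairMatrix μ T) (T (leftCell v)) (T v) := by
  refine ⟨(adjPairMatrix_apply_ne_zero_iff T _ _).2 ⟨hv, rfl⟩, fun j hj => ?_,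
    fun i hi => ?_⟩
  · obtain ⟨w, rfl⟩ := T.surjective j
    by_contra h
    obtain ⟨hw, hvw⟩ := (adjPairMatrix_apply_ne_zero_iff T _ _).1 h
    exact hj.ne (congrArg T (eq_of_leftCell_eq hv hw hvw).symm)
  · obtain ⟨w, rfl⟩ := T.surjective i
    by_contra h
    obtain ⟨-, rfl⟩ := (adjPairMatrix_apply_ne_zero_iff T _ _).1 h
    exact lt_irrefl _ hi

theorem pivotRow_adjPairMatrix (v : μ.cells) :
    pivotRow (adjPairMatrix μ T) (T v) = if v.1.2 = 0 then 0 else (T (leftCell v) : ℕ) + 1 := by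
  split_ifs with hv
  · refine pivotRow_eq_zero_of_forall fun i => ?_
    obtain ⟨u, rfl⟩ := T.surjective i
    by_contra h
    exact ((adjPairMatrix_apply_ne_zero_iff T u v).1 h).1 hv
  · exact pivotRow_eq_of_isPivot (isPivot_adjPairMatrix T hv)

theorem pivotRow_adjPairMatrix_eq_zero_iff (v : μ.cells) :
    pivotRow (adjPairMatrix μ T) (T v) = 0 ↔ v.1.2 = 0 := by
  rw [pivotRow_adjPairMatrix]
  split_ifs with hv <;> simp [hv]

end AdjPairMatrix

theorem exists_adjPairMatrix_conj_iff (T₀ : μ.cells ≃ Fin μ.card)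
    (M : Matrix (Fin μ.card) (Fin μ.card) ℂ) :
    (∃ σ : Perm (Fin μ.card),
        M = permMatrix σ * adjPairMatrix μ T₀ * permMatrix σ⁻¹) ↔
      ∃ T, M = adjPairMatrix μ T := by
  constructor
  · rintro ⟨σ, rfl⟩
    exact ⟨T₀.trans σ, (adjPairMatrix_trans T₀ σ).symm⟩
  · rintro ⟨T, rfl⟩
    refine ⟨T₀.symm.trans T, ?_⟩
    rw [← adjPairMatrix_trans, ← trans_assoc, self_trans_symm, refl_trans]

/-- `π r` is the rank of row `r` within each column. -/
def readingKey (π : Perm (Fin (μ.colLen 0))) (u : μ.cells) : ℕ ×ₗ Fin (μ.colLen 0) :=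
  toLex (u.1.2, π (cellRow u))

def IsColumnReading (π : Perm (Fin (μ.colLen 0))) (T : μ.cells ≃ Fin μ.card) : Prop :=
  ∀ u v, T u < T v ↔ readingKey π u < readingKey π v

section ColumnReading

variable {π : Perm (Fin (μ.colLen 0))} {T T' : μ.cells ≃ Fin μ.card} {u v : μ.cells}

theorem readingKey_injective (π : Perm (Fin (μ.colLen 0))) : Injective (readingKey π) := by
  intro u v h
  simp only [readingKey, EmbeddingLike.apply_eq_iff_eq, Prod.mk.injEq] at h
  exact cell_ext (congrArg Fin.val h.2) h.1

theorem readingKey_lt_iff : readingKey π u < readingKey π v ↔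
    u.1.2 < v.1.2 ∨ u.1.2 = v.1.2 ∧ π (cellRow u) < π (cellRow v) :=
  Prod.Lex.toLex_lt_toLex

theorem readingKey_lt_of_snd_eq_zero (hu : u.1.2 = 0) (hv : v.1.2 ≠ 0) :
    readingKey π u < readingKey π v :=
  readingKey_lt_iff.2 (Or.inl (by omega))

theorem readingKey_leftCell_lt (hv : v.1.2 ≠ 0) : readingKey π (leftCell v) < readingKey π v :=
  readingKey_lt_iff.2 (Or.inl (by simp only [leftCell]; omega))

theorem readingKey_leftCell_lt_iff (hu : u.1.2 ≠ 0) (hv : v.1.2 ≠ 0) :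
    readingKey π (leftCell u) < readingKey π (leftCell v) ↔
      readingKey π u < readingKey π v := by
  have hlt : u.1.2 - 1 < v.1.2 - 1 ↔ u.1.2 < v.1.2 := by omega
  have heq : u.1.2 - 1 = v.1.2 - 1 ↔ u.1.2 = v.1.2 := by omega
  simp only [readingKey_lt_iff, leftCell, cellRow, hlt, heq]

theorem readingKey_leftCell_le_iff (hu : u.1.2 ≠ 0) (hv : v.1.2 ≠ 0) :
    readingKey π (leftCell u) ≤ readingKey π (leftCell v) ↔
      readingKey π u ≤ readingKey π v := by
  simp only [← not_lt, readingKey_leftCell_lt_iff hv hu]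

theorem exists_isColumnReading (π : Perm (Fin (μ.colLen 0))) : ∃ T, IsColumnReading π T :=
  exists_equiv_fin_lt_iff (readingKey_injective π) (Fintype.card_coe _)

theorem IsColumnReading.eq (hT : IsColumnReading π T) (hT' : IsColumnReading π T') : T = T' :=
  Equiv.ext_of_lt_iff fun u v => (hT u v).trans (hT' u v).symm

theorem IsColumnReading.le_iff (hT : IsColumnReading π T) :
    T u ≤ T v ↔ readingKey π u ≤ readingKey π v := by
  rw [← not_lt, ← not_lt, hT]

theorem IsColumnReading.isHighestForm (hT : IsColumnReading π T) :
    IsHighestForm (adjPairMatrix μ T) := by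
  refine ⟨fun i j hji => ?_, fun j j' hjj' => ?_⟩
  · obtain ⟨u, rfl⟩ := T.surjective i
    obtain ⟨v, rfl⟩ := T.surjective j
    by_contra h
    obtain ⟨hv, rfl⟩ := (adjPairMatrix_apply_ne_zero_iff T _ _).1 h
    exact not_lt.2 hji ((hT _ _).2 (readingKey_leftCell_lt hv))
  · obtain ⟨v, rfl⟩ := T.surjective j
    obtain ⟨v', rfl⟩ := T.surjective j'
    rw [pivotRow_adjPairMatrix, pivotRow_adjPairMatrix]
    split_ifs with hv hv' hv'
    · exact le_rfl
    · exact Nat.zero_le _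
    · exact absurd (hT.le_iff.1 hjj') (not_le.2 (readingKey_lt_of_snd_eq_zero hv' hv))
    · exact Nat.succ_le_succ
        (hT.le_iff.2 ((readingKey_leftCell_le_iff hv hv').2 (hT.le_iff.1 hjj')))

end ColumnReading

section HighestForm

variable {T : μ.cells ≃ Fin μ.card}

/-- The columns without pivot are those of the first-column cells; as the pivot rows increase,
they come first. -/
theorem lt_colLen_iff_of_isHighestForm (hT : IsHighestForm (adjPairMatrix μ T)) (u : μ.cells) :
    (T u : ℕ) < μ.colLen 0 ↔ u.1.2 = 0 := by
  set s := univ.filter fun j => pivotRow (adjPairMatrix μ T) j = 0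
  have hs : IsLowerSet (s : Set (Fin μ.card)) := fun i j hij hj => by
    simp only [coe_filter, mem_univ, true_and, Set.mem_ofPred_eq, s] at hj ⊢
    exact Nat.eq_zero_of_le_zero (hj ▸ hT.2 hij)
  have hcard : #s = μ.colLen 0 := by
    rw [← card_cells_snd_eq, ← Fintype.card_subtype]
    exact Fintype.card_congr
      (T.subtypeEquiv fun v => (pivotRow_adjPairMatrix_eq_zero_iff T v).symm).symm
  rw [← hcard, Fin.lt_card_iff_mem_of_isLowerSet hs, mem_filter,
    pivotRow_adjPairMatrix_eq_zero_iff, and_iff_right (mem_univ _)]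

theorem lt_of_snd_eq_zero_of_isHighestForm (hT : IsHighestForm (adjPairMatrix μ T))
    {u v : μ.cells} (hu : u.1.2 = 0) (hv : v.1.2 ≠ 0) : T u < T v := by
  have := (lt_colLen_iff_of_isHighestForm hT u).2 hu
  have := mt (lt_colLen_iff_of_isHighestForm hT v).1 hv
  rw [Fin.lt_def]
  omega

theorem leftCell_lt_leftCell_iff_of_isHighestForm (hT : IsHighestForm (adjPairMatrix μ T))
    {u v : μ.cells} (hu : u.1.2 ≠ 0) (hv : v.1.2 ≠ 0) :
    T (leftCell u) < T (leftCell v) ↔ T u < T v := by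
  have mono : ∀ {u v : μ.cells}, u.1.2 ≠ 0 → v.1.2 ≠ 0 → T u ≤ T v →
      T (leftCell u) ≤ T (leftCell v) := fun hu hv h => by
    have := hT.2 h
    rw [pivotRow_adjPairMatrix, pivotRow_adjPairMatrix, if_neg hu, if_neg hv] at this
    exact Nat.le_of_succ_le_succ this
  refine ⟨fun h => not_le.1 fun h' => (mono hv hu h').not_gt h, fun h => ?_⟩
  exact lt_of_le_of_ne (mono hu hv h.le)
    fun h' => h.ne (congrArg T (eq_of_leftCell_eq hu hv (T.injective h')))

/-- The rank of a row is the label of its first cell. -/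
theorem exists_isColumnReading_of_isHighestForm (hT : IsHighestForm (adjPairMatrix μ T)) :
    ∃ π, IsColumnReading π T := by
  have hlt r : (T (firstCell r) : ℕ) < μ.colLen 0 :=
    (lt_colLen_iff_of_isHighestForm hT _).2 rfl
  have hinj : Injective fun r => (⟨T (firstCell r), hlt r⟩ : Fin (μ.colLen 0)) :=
    fun r r' h => congrArg cellRow (T.injective (Fin.ext (Fin.mk.inj h)))
  set π := Equiv.ofBijective _ (Finite.injective_iff_bijective.1 hinj)
  have hπ {u : μ.cells} (hu : u.1.2 = 0) : (π (cellRow u) : ℕ) = T u := by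
    simp only [π, ofBijective_apply, firstCell_cellRow hu]
  refine ⟨π, fun u v => ?_⟩
  induction hc : u.1.2 generalizing u v with
  | zero =>
    by_cases hv : v.1.2 = 0
    · rw [readingKey_lt_iff, hc, hv, Fin.lt_def, Fin.lt_def, hπ hc, hπ hv]
      simp
    · exact iff_of_true (lt_of_snd_eq_zero_of_isHighestForm hT hc hv)
        (readingKey_lt_of_snd_eq_zero hc hv)
  | succ c ih =>
    by_cases hv : v.1.2 = 0
    · exact iff_of_false (lt_asymm (lt_of_snd_eq_zero_of_isHighestForm hT hv (by omega)))
        (lt_asymm (readingKey_lt_of_snd_eq_zero hv (by omega)))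
    · rw [← leftCell_lt_leftCell_iff_of_isHighestForm hT (by omega) hv,
        ih (leftCell u) (leftCell v) (by simp [leftCell, hc]),
        readingKey_leftCell_lt_iff (by omega) hv]

end HighestForm

noncomputable def rowPerm (ρ : Perm (Fin (μ.colLen 0)))
    (hρ : ∀ r, μ.rowLen (ρ r) = μ.rowLen r) : Perm μ.cells :=
  Equiv.ofBijective
    (fun u => ⟨(ρ (cellRow u), u.1.2), mem_iff_lt_rowLen.2 <| by
      rw [hρ]
      exact mem_iff_lt_rowLen.1 u.2⟩)
    (Finite.injective_iff_bijective.1 fun u v h => by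
      simp only [Subtype.mk.injEq, Prod.mk.injEq, Fin.val_inj, EmbeddingLike.apply_eq_iff_eq] at h
      exact cell_ext (congrArg Fin.val h.1) h.2)

theorem adjPairMatrix_rowPerm_trans (ρ : Perm (Fin (μ.colLen 0)))
    (hρ : ∀ r, μ.rowLen (ρ r) = μ.rowLen r) (T : μ.cells ≃ Fin μ.card) :
    adjPairMatrix μ ((rowPerm ρ hρ).trans T) = adjPairMatrix μ T := by
  ext i j
  obtain ⟨u, rfl⟩ := ((rowPerm ρ hρ).trans T).surjective i
  obtain ⟨v, rfl⟩ := ((rowPerm ρ hρ).trans T).surjective j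
  rw [adjPairMatrix_apply_apply, trans_apply, trans_apply, adjPairMatrix_apply_apply]
  refine if_congr (and_congr_left' ?_) rfl rfl
  simp only [rowPerm, ofBijective_apply]
  rw [Fin.val_inj, ρ.injective.eq_iff, Fin.ext_iff]
  rfl

theorem reflTransGen_adjPairMatrix_firstCell_iff (T : μ.cells ≃ Fin μ.card)
    (r : Fin (μ.colLen 0)) (v : μ.cells) :
    Relation.ReflTransGen (fun i j => adjPairMatrix μ T i j ≠ 0) (T (firstCell r)) (T v) ↔
      v.1.1 = r := by
  constructor
  · intro h
    suffices ∀ j, Relation.ReflTransGen (fun i j => adjPairMatrix μ T i j ≠ 0)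
        (T (firstCell r)) j → (T.symm j).1.1 = r by simpa using this _ h
    intro j hj
    induction hj with
    | refl => simp [firstCell]
    | @tail a b _ hstep ih =>
      obtain ⟨w, rfl⟩ := T.surjective a
      obtain ⟨x, rfl⟩ := T.surjective b
      obtain ⟨-, rfl⟩ := (adjPairMatrix_apply_ne_zero_iff T _ _).1 hstep
      simpa [leftCell] using ih
  · intro h
    induction hc : v.1.2 generalizing v with
    | zero => rw [← cell_ext (u := firstCell r) h.symm hc.symm]
    | succ c ih =>
      exact (ih (leftCell v) h (by simp [leftCell, hc])).tail
        ((adjPairMatrix_apply_ne_zero_iff T _ _).2 ⟨by omega, rfl⟩)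

theorem numReachable_adjPairMatrix_firstCell (T : μ.cells ≃ Fin μ.card)
    (r : Fin (μ.colLen 0)) :
    numReachable (adjPairMatrix μ T) (T (firstCell r)) = μ.rowLen r := by
  rw [numReachable, ← card_cells_fst_eq, ← Nat.card_eq_fintype_card]
  exact Nat.card_congr
    (T.subtypeEquiv fun v => (reflTransGen_adjPairMatrix_firstCell_iff T r v).symm).symm

section SameMatrix

variable {π π' : Perm (Fin (μ.colLen 0))} {T T' : μ.cells ≃ Fin μ.card}

theorem IsColumnReading.apply_firstCell (hT : IsColumnReading π T) (t : Fin (μ.colLen 0)) :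
    (T (firstCell (π.symm t)) : ℕ) = t := by
  have hmem {v : μ.cells} :
      T v < T (firstCell (π.symm t)) ↔ v.1.2 = 0 ∧ π (cellRow v) < t := by
    rw [hT, readingKey_lt_iff]
    simp [firstCell, cellRow]
  let e : {s // s < t} ≃ {v // T v < T (firstCell (π.symm t))} :=
    { toFun s := ⟨firstCell (π.symm s), hmem.2 ⟨rfl, by simpa using s.2⟩⟩
      invFun v := ⟨π (cellRow v), (hmem.1 v.2).2⟩
      left_inv s := by simp
      right_inv v := Subtype.ext (by simp [firstCell_cellRow (hmem.1 v.2).1]) }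
  rw [T.val_eq_card_lt, ← Fintype.card_congr e, Fintype.card_subtype, filter_gt_eq_Iio,
    Fin.card_Iio]

theorem IsColumnReading.adjPairMatrix_eq_iff (hT : IsColumnReading π T)
    (hT' : IsColumnReading π' T') :
    adjPairMatrix μ T = adjPairMatrix μ T' ↔
      ∀ t, μ.rowLen (π.symm t) = μ.rowLen (π'.symm t) := by
  constructor
  · intro h t
    have hlabel : T (firstCell (π.symm t)) = T' (firstCell (π'.symm t)) :=
      Fin.ext (by rw [hT.apply_firstCell, hT'.apply_firstCell])
    rw [← numReachable_adjPairMatrix_firstCell T, ← numReachable_adjPairMatrix_firstCell T', h,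
      hlabel]
  · intro h
    have hρ r : μ.rowLen ((π.trans π'.symm) r) = μ.rowLen r := by
      simpa using (h (π r)).symm
    have hTT' : T = (rowPerm _ hρ).trans T' := hT.eq fun u v => by
      rw [trans_apply, trans_apply, hT']
      simp [readingKey, rowPerm, cellRow]
    rw [hTT', adjPairMatrix_rowPerm_trans]

end SameMatrix

theorem setOf_conj_isHighestForm_eq_range (T₀ : μ.cells ≃ Fin μ.card)
    {T : Perm (Fin (μ.colLen 0)) → μ.cells ≃ Fin μ.card}
    (hT : ∀ π, IsColumnReading π (T π)) :
    {M | (∃ σ : Perm (Fin μ.card),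
          M = permMatrix σ * adjPairMatrix μ T₀ * permMatrix σ⁻¹) ∧ IsHighestForm M} =
      Set.range fun π => adjPairMatrix μ (T π) := by
  ext M
  simp only [Set.mem_ofPred_eq, Set.mem_range, exists_adjPairMatrix_conj_iff]
  constructor
  · rintro ⟨⟨T', rfl⟩, hT'⟩
    obtain ⟨π, hπ⟩ := exists_isColumnReading_of_isHighestForm hT'
    exact ⟨π, by rw [(hT π).eq hπ]⟩
  · rintro ⟨π, rfl⟩
    exact ⟨⟨T π, rfl⟩, (hT π).isHighestForm⟩

theorem card_range_adjPairMatrix_of_isColumnReading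
    {T : Perm (Fin (μ.colLen 0)) → μ.cells ≃ Fin μ.card}
    (hT : ∀ π, IsColumnReading π (T π)) :
    Nat.card (Set.range fun π => adjPairMatrix μ (T π)) =
      (μ.colLen 0).factorial / ∏ v ∈ μ.rowLens.toFinset, (μ.rowLens.count v).factorial := by
  set r : Fin (μ.colLen 0) → ℕ := fun r => μ.rowLen r
  have hrange : Set.range (fun π : Perm (Fin (μ.colLen 0)) => r ∘ π.symm) =
      Set.range fun σ : Perm (Fin (μ.colLen 0)) => r ∘ σ :=
    symm_bijective.surjective.range_comp fun σ => r ∘ σ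
  rw [Nat.card_range_eq_of_forall_eq_iff (G := fun π => r ∘ π.symm)
      fun π π' => ((hT π).adjPairMatrix_eq_iff (hT π')).trans funext_iff.symm,
    hrange, Nat.card_range_comp_perm, Fintype.card_fin, image_rowLen]
  simp only [count_rowLens, r]

end YoungDiagram

theorem stmt5_general (μ : YoungDiagram) (ord : Fin μ.card ≃ μ.cells) :
    {M : Matrix (Fin μ.card) (Fin μ.card) ℂ |
        (∃ σ : Equiv.Perm (Fin μ.card),
          M = permMatrix σ * adjPairMatrix μ ord.symm * permMatrix σ⁻¹) ∧
        IsHighestForm M}.ncard =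
      Nat.factorial (μ.colLen 0) /
        ∏ v ∈ μ.rowLens.toFinset, Nat.factorial (μ.rowLens.count v) := by
  choose T hT using YoungDiagram.exists_isColumnReading (μ := μ)
  rw [YoungDiagram.setOf_conj_isHighestForm_eq_range ord.symm hT, ← Nat.card_coe_set_eq,
    YoungDiagram.card_range_adjPairMatrix_of_isColumnReading hT]

/-- letting `N` be the nilpotent Jordan matrix of the Young diagram `μ`
(the adjacent-pair matrix of the English filling), the number of distinct matrices
`σ N σ⁻¹` (for `σ` ranging over permutation matrices) in highest form is
`ℓ! / (d₁! d₂! ⋯ d_k!)`, where `ℓ = μ.colLen 0` is the number of rows of `μ` and the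
`dᵢ` are the multiplicities of the distinct row lengths of `μ`. -/
theorem stmt5 (μ : YoungDiagram) (ord : Fin μ.card ≃ μ.cells) (hord : EnglishOrd μ ord) :
    {M : Matrix (Fin μ.card) (Fin μ.card) ℂ |
        (∃ σ : Equiv.Perm (Fin μ.card),
          M = permMatrix σ * adjPairMatrix μ ord.symm * permMatrix σ⁻¹) ∧
        IsHighestForm M}.ncard =
      Nat.factorial (μ.colLen 0) /
        ∏ v ∈ μ.rowLens.toFinset, Nat.factorial (μ.rowLens.count v) :=
  stmt5_general μ ord
end

section
/- Let N be the nilpotent Jordan matrix for Young diagram λ with n boxes, h a Hessenberg function with Hessenberg space H, and σ ∈ S_n. Then the map w ↦ φ_{λ,σ}^{-1}(w^{-1}) is a bijection from {w ∈ S_n : w^{-1}(σ N σ^{-1})w ∈ H} onto the set of (h,λ)-permissible fillings of λ. -/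
/-- Value `i` is directly left-adjacent to value `j` in the filling `T`. -/
def AdjacentE (μ : YoungDiagram) (T : μ.cells ≃ Fin μ.card) (i j : Fin μ.card) : Prop :=
  (T.symm j : ℕ × ℕ).1 = (T.symm i : ℕ × ℕ).1 ∧
    (T.symm j : ℕ × ℕ).2 = (T.symm i : ℕ × ℕ).2 + 1

/-- `(h,λ)`-permissibility of a filling. -/
def Permissible (μ : YoungDiagram) (h : Fin μ.card → Fin μ.card)
    (T : μ.cells ≃ Fin μ.card) : Prop :=
  ∀ i j, AdjacentE μ T i j → i ≤ h j

/-- `φ_{λ,σ}⁻¹(τ)`: the filling whose reading, in the box order determined by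
`φ_λ⁻¹(σ)`, is the one-line notation of `τ`. -/
def phiLambdaSigmaInv (μ : YoungDiagram) (ord : Fin μ.card ≃ μ.cells)
    (σ τ : Equiv.Perm (Fin μ.card)) : μ.cells ≃ Fin μ.card :=
  ord.symm.trans (σ.trans τ)

/-!
Conjugating by permutation matrices only permutes entries:
`(w⁻¹ σ N σ⁻¹ w)_{ij} = N_{σ⁻¹ w i, σ⁻¹ w j}`, and `N_{ab} ≠ 0` exactly when the box with
English label `a` lies directly left of the box with label `b`. Hence the `(i, j)` entry of the
conjugate is nonzero exactly when `i` lies directly left of `j` in the filling `φ_{λ,σ}⁻¹(w⁻¹)`,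
so the Hessenberg condition on `w` is permissibility of that filling. Since `w ↦ φ_{λ,σ}⁻¹(w⁻¹)`
is a bijection `S_n → Fill(λ)`, it restricts to a bijection between the two sets.
-/

lemma mul_permMatrix_apply {n : ℕ} (A : Matrix (Fin n) (Fin n) ℂ) (w : Equiv.Perm (Fin n))
    (i j : Fin n) : (A * permMatrix w) i j = A i (w j) := by
  simp [permMatrix, Matrix.mul_apply]

lemma permMatrix_mul_apply {n : ℕ} (w : Equiv.Perm (Fin n)) (A : Matrix (Fin n) (Fin n) ℂ)
    (i j : Fin n) : (permMatrix w * A) i j = A (w⁻¹ i) j := by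
  simp [permMatrix, Matrix.mul_apply, ← Equiv.eq_symm_apply, Equiv.Perm.inv_def]

lemma permMatrix_conj_apply {n : ℕ} (A : Matrix (Fin n) (Fin n) ℂ) (σ w : Equiv.Perm (Fin n))
    (i j : Fin n) :
    (permMatrix w⁻¹ * (permMatrix σ * A * permMatrix σ⁻¹) * permMatrix w) i j
      = A (σ⁻¹ (w i)) (σ⁻¹ (w j)) := by
  rw [mul_permMatrix_apply, permMatrix_mul_apply, mul_permMatrix_apply, permMatrix_mul_apply,
    inv_inv]

lemma adjPairMatrix_eq_zero_iff (μ : YoungDiagram) (T : μ.cells ≃ Fin μ.card)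
    (i j : Fin μ.card) : adjPairMatrix μ T i j = 0 ↔ ¬ AdjacentE μ T i j := by
  simp only [adjPairMatrix, AdjacentE, Matrix.of_apply, ite_eq_right_iff, one_ne_zero,
    imp_false]

lemma phiLambdaSigmaInv_eq_equivCongr (μ : YoungDiagram) (ord : Fin μ.card ≃ μ.cells)
    (σ : Equiv.Perm (Fin μ.card)) :
    phiLambdaSigmaInv μ ord σ = Equiv.equivCongr (σ.symm.trans ord) (Equiv.refl _) := by
  funext τ
  ext c
  simp [phiLambdaSigmaInv]

lemma phiLambdaSigmaInv_bijective (μ : YoungDiagram) (ord : Fin μ.card ≃ μ.cells)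
    (σ : Equiv.Perm (Fin μ.card)) : Function.Bijective (phiLambdaSigmaInv μ ord σ) := by
  rw [phiLambdaSigmaInv_eq_equivCongr]
  exact Equiv.bijective _

lemma hessenberg_conj_iff_permissible (μ : YoungDiagram) (ord : Fin μ.card ≃ μ.cells)
    (h : Fin μ.card → Fin μ.card) (σ w : Equiv.Perm (Fin μ.card)) :
    (∀ i j : Fin μ.card, h j < i →
        (permMatrix w⁻¹ * (permMatrix σ * adjPairMatrix μ ord.symm * permMatrix σ⁻¹) *
          permMatrix w) i j = 0)
      ↔ Permissible μ h (phiLambdaSigmaInv μ ord σ w⁻¹) := by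
  have hadj : ∀ i j, AdjacentE μ (phiLambdaSigmaInv μ ord σ w⁻¹) i j ↔
      AdjacentE μ ord.symm (σ⁻¹ (w i)) (σ⁻¹ (w j)) := fun _ _ => Iff.rfl
  simp only [Permissible, permMatrix_conj_apply, adjPairMatrix_eq_zero_iff, hadj]
  exact forall₂_congr fun i j => by rw [← not_imp_not, not_not, not_lt]

theorem stmt9_general (μ : YoungDiagram) (ord : Fin μ.card ≃ μ.cells)
    (h : Fin μ.card → Fin μ.card)
    (σ : Equiv.Perm (Fin μ.card)) :
    Set.BijOn (fun w : Equiv.Perm (Fin μ.card) => phiLambdaSigmaInv μ ord σ w⁻¹)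
      {w : Equiv.Perm (Fin μ.card) |
        ∀ i j : Fin μ.card, h j < i →
          (permMatrix w⁻¹ * (permMatrix σ * adjPairMatrix μ ord.symm * permMatrix σ⁻¹) *
            permMatrix w) i j = 0}
      {T : μ.cells ≃ Fin μ.card | Permissible μ h T} := by
  have hbij : Function.Bijective fun w : Equiv.Perm (Fin μ.card) =>
      phiLambdaSigmaInv μ ord σ w⁻¹ :=
    (phiLambdaSigmaInv_bijective μ ord σ).comp (Equiv.inv _).bijective
  convert hbij.bijOn_preimage using 1
  ext w
  exact hessenberg_conj_iff_permissible μ ord h σ w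

/-- let `N` be the nilpotent Jordan matrix for `μ` (the adjacent-pair
matrix of the English filling), `h` a Hessenberg function with Hessenberg space `H`,
and `σ ∈ S_n`. The map `w ↦ φ_{λ,σ}⁻¹(w⁻¹)` is a bijection from
`{w : w⁻¹ (σ N σ⁻¹) w ∈ H}` (the `S¹`-fixed points of `Hess(σNσ⁻¹, h)`) onto the set
of `(h,λ)`-permissible fillings of `μ`. -/
theorem stmt9 (μ : YoungDiagram) (ord : Fin μ.card ≃ μ.cells) (hord : EnglishOrd μ ord)
    (h : Fin μ.card → Fin μ.card) (hh1 : ∀ i, i ≤ h i) (hh2 : Monotone h)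
    (σ : Equiv.Perm (Fin μ.card)) :
    Set.BijOn (fun w : Equiv.Perm (Fin μ.card) => phiLambdaSigmaInv μ ord σ w⁻¹)
      {w : Equiv.Perm (Fin μ.card) |
        ∀ i j : Fin μ.card, h j < i →
          (permMatrix w⁻¹ * (permMatrix σ * adjPairMatrix μ ord.symm * permMatrix σ⁻¹) *
            permMatrix w) i j = 0}
      {T : μ.cells ≃ Fin μ.card | Permissible μ h T} :=
  stmt9_general μ ord h σ
end
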